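/- arXiv:1702.05253 — 4 statements merged into one kernel-verified Lean document; each statement's English description precedes it below -/
import Mathlib

section
/- Let H = (V',E') be a finite, simple, connected graph with at least one edge, let G = L(H) be its line graph, and set β = 1 if H is bipartite and β = 0 otherwise. Then the dimension of the eigenspace of the adjacency matrix A(G) for the eigenvalue −2 equals |E'| − |V'| + β; in particular, −2 is an eigenvalue of A(G) if and only if |E'| − |V'| + β > 0. -/
open scoped Classical
open Matrix
set_option linter.unusedSectionVars false

section Aux

variable {V : Type*} [Fintype V] [DecidableEq V] (H : SimpleGraph V) [DecidableRel H.Adj]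

/-- The (unsigned) incidence matrix with rows indexed by edges. -/
noncomputable def incB : Matrix H.edgeSet V ℝ :=
  fun e v => if v ∈ (e : Sym2 V) then 1 else 0

lemma sum_ind_mul (a b : V) (hab : a ≠ b) (x : V → ℝ) :
    ∑ v, (if v ∈ s(a, b) then (1 : ℝ) else 0) * x v = x a + x b := by
  have : ∀ v : V, (if v ∈ s(a, b) then (1 : ℝ) else 0) * x v
      = (if v = a then x v else 0) + (if v = b then x v else 0) := by
    intro v
    by_cases hva : v = a <;> by_cases hvb : v = b <;>
      simp_all [Sym2.mem_iff]
  simp_rw [this, Finset.sum_add_distrib, Finset.sum_ite_eq', Finset.mem_univ, if_true]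

lemma mulVec_incB_eq_zero_iff (x : V → ℝ) :
    (incB H) *ᵥ x = 0 ↔ ∀ a b, H.Adj a b → x a + x b = 0 := by
  constructor
  · intro h a b hab
    have he : s(a, b) ∈ H.edgeSet := H.mem_edgeSet.2 hab
    have h2 : ∑ v, (if v ∈ s(a, b) then (1 : ℝ) else 0) * x v = 0 :=
      congrFun h ⟨s(a, b), he⟩
    rwa [sum_ind_mul a b hab.ne] at h2
  · intro h
    funext e
    obtain ⟨e, he⟩ := e
    induction e with
    | h a b =>
      have hab : H.Adj a b := H.mem_edgeSet.1 he
      show ∑ v, (if v ∈ s(a,b) then (1:ℝ) else 0) * x v = 0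
      rw [sum_ind_mul a b hab.ne]
      exact h a b hab

lemma abs_const_of_ker (hconn : H.Connected) {x : V → ℝ}
    (hx : ∀ a b, H.Adj a b → x a + x b = 0) (u v : V) : |x u| = |x v| := by
  obtain ⟨p⟩ := hconn u v
  induction p with
  | nil => rfl
  | @cons a c d h p ih =>
    have : x a = -x c := by linarith [hx a c h]
    rw [← ih, this, abs_neg]

lemma finrank_ker_incB (hconn : H.Connected) :
    Module.finrank ℝ (LinearMap.ker (incB H).mulVecLin)
      = if H.Colorable 2 then 1 else 0 := by
  have hker : ∀ x : V → ℝ, x ∈ LinearMap.ker (incB H).mulVecLin ↔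
      ∀ a b, H.Adj a b → x a + x b = 0 := by
    intro x
    rw [LinearMap.mem_ker, Matrix.mulVecLin_apply, mulVec_incB_eq_zero_iff]
  split_ifs with hcol
  · -- bipartite: kernel is spanned by the sign vector
    obtain ⟨C⟩ := hcol
    set s : V → ℝ := fun v => if C v = 0 then 1 else -1 with hs
    have hsker : ∀ a b, H.Adj a b → s a + s b = 0 := by
      intro a b hab
      have hne := C.valid hab
      by_cases h0 : C a = 0
      · have : C b ≠ 0 := by rw [← h0]; exact hne.symm
        simp [hs, h0, this]
      · have : C b = 0 := by omega
        simp [hs, h0, this]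
    have hs1 : ∀ v, s v * s v = 1 := by
      intro v; by_cases h : C v = 0 <;> simp [hs, h]
    obtain ⟨v₀⟩ := hconn.nonempty
    have hspan : LinearMap.ker (incB H).mulVecLin = Submodule.span ℝ {s} := by
      apply le_antisymm
      · intro x hx
        rw [hker] at hx
        have hxv : ∀ v, x v = (x v₀ * s v₀) * s v := by
          intro v
          set y : V → ℝ := fun w => x w - (x v₀ * s v₀) * s w with hy
          have hyker : ∀ a b, H.Adj a b → y a + y b = 0 := by
            intro a b hab
            have := hx a b hab
            have := hsker a b hab
            have h2 : x v₀ * s v₀ * s a + x v₀ * s v₀ * s b = 0 := by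
              rw [← mul_add, ‹s a + s b = 0›, mul_zero]
            simp only [hy]; linarith
          have hy0 : y v₀ = 0 := by simp [hy, mul_assoc, hs1 v₀]
          have := abs_const_of_ker H hconn hyker v v₀
          rw [hy0, abs_zero, abs_eq_zero] at this
          have : x v - (x v₀ * s v₀) * s v = 0 := this
          linarith
        have : x = (x v₀ * s v₀) • s := by
          funext v; exact hxv v
        rw [this]
        exact Submodule.smul_mem _ _ (Submodule.mem_span_singleton_self s)
      · rw [Submodule.span_le, Set.singleton_subset_iff]
        exact (hker s).2 hsker
    rw [hspan]
    apply finrank_span_singleton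
    intro h
    have := congrFun h v₀
    by_cases h0 : C v₀ = 0 <;> simp [hs, h0] at this
  · -- non-bipartite: kernel is trivial
    have : LinearMap.ker (incB H).mulVecLin = ⊥ := by
      rw [eq_bot_iff]
      intro x hx
      rw [hker] at hx
      simp only [Submodule.mem_bot]
      by_contra hne
      obtain ⟨u, hu⟩ : ∃ u, x u ≠ 0 := by
        by_contra h
        push_neg at h
        exact hne (funext h)
      have habs : ∀ v, x v ≠ 0 := by
        intro v hv
        have := abs_const_of_ker H hconn hx u v
        rw [hv, abs_zero, abs_eq_zero] at this
        exact hu this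
      refine hcol ⟨SimpleGraph.Coloring.mk (fun v => if 0 < x v then 0 else 1) ?_⟩
      intro a b hab
      have hsum := hx a b hab
      by_cases ha : 0 < x a
      · have hb : ¬ 0 < x b := by linarith
        simp [ha, hb]
      · have ha' : x a < 0 := lt_of_le_of_ne (not_lt.1 ha) (habs a)
        have hb : 0 < x b := by linarith
        simp [ha, hb]
    rw [this, finrank_bot]
lemma incB_mul_transpose [DecidableRel H.lineGraph.Adj] :
    incB H * (incB H)ᵀ = H.lineGraph.adjMatrix ℝ + (2 : ℝ) • 1 := by
  ext e f
  rw [Matrix.mul_apply]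
  obtain ⟨e, he⟩ := e
  obtain ⟨f, hf⟩ := f
  induction e with
  | h a b =>
    induction f with
    | h c d =>
      have hab : a ≠ b := (H.mem_edgeSet.1 he).ne
      have hsum : ∑ v, incB H ⟨s(a, b), he⟩ v * (incB H)ᵀ v ⟨s(c, d), hf⟩
          = (if a ∈ s(c, d) then (1 : ℝ) else 0) + (if b ∈ s(c, d) then 1 else 0) :=
        sum_ind_mul a b hab (fun v => if v ∈ s(c, d) then (1 : ℝ) else 0)
      rw [hsum, Matrix.add_apply, SimpleGraph.adjMatrix_apply, Matrix.smul_apply,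
        Matrix.one_apply, smul_eq_mul]
      by_cases heq : (⟨s(a, b), he⟩ : H.edgeSet) = ⟨s(c, d), hf⟩
      · have hv : s(a, b) = s(c, d) := Subtype.ext_iff.1 heq
        have ha : a ∈ s(c, d) := hv ▸ Sym2.mem_mk_left a b
        have hb : b ∈ s(c, d) := hv ▸ Sym2.mem_mk_right a b
        have hnadj : ¬ H.lineGraph.Adj ⟨s(a, b), he⟩ ⟨s(c, d), hf⟩ := by
          rw [heq]; exact H.lineGraph.irrefl
        simp [ha, hb, heq, hnadj]
        norm_num
      · have hone : ¬ (a ∈ s(c, d) ∧ b ∈ s(c, d)) := by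
          intro ⟨ha, hb⟩
          exact heq (Subtype.ext ((Sym2.mem_and_mem_iff hab).1 ⟨ha, hb⟩).symm)
        by_cases hadj : H.lineGraph.Adj ⟨s(a, b), he⟩ ⟨s(c, d), hf⟩
        · obtain ⟨-, v, hv1, hv2⟩ := SimpleGraph.lineGraph_adj_iff_exists.1 hadj
          have hv1' : v = a ∨ v = b := Sym2.mem_iff.1 hv1
          by_cases haf : a ∈ s(c, d)
          · have hbf : b ∉ s(c, d) := fun hb => hone ⟨haf, hb⟩
            simp [haf, hbf, hadj, heq]
          · have hbf : b ∈ s(c, d) := by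
              rcases hv1' with rfl | rfl
              · exact absurd hv2 haf
              · exact hv2
            simp [haf, hbf, hadj, heq]
        · have hnm : ∀ v, v ∈ s(a, b) → v ∉ s(c, d) := by
            intro v hv1 hv2
            exact hadj (SimpleGraph.lineGraph_adj_iff_exists.2 ⟨heq, v, hv1, hv2⟩)
          have haf : a ∉ s(c, d) := hnm a (Sym2.mem_mk_left a b)
          have hbf : b ∉ s(c, d) := hnm b (Sym2.mem_mk_right a b)
          simp [haf, hbf, hadj, heq]

lemma eigenspace_eq_ker [DecidableRel H.lineGraph.Adj] :
    Module.End.eigenspace (Matrix.toLin' (H.lineGraph.adjMatrix ℝ)) (-2)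
      = LinearMap.ker ((incB H)ᵀ).mulVecLin := by
  ext x
  rw [Module.End.mem_eigenspace_iff, LinearMap.mem_ker, Matrix.toLin'_apply,
    Matrix.mulVecLin_apply]
  constructor
  · intro hx
    have h1 : (incB H * (incB H)ᵀ) *ᵥ x = 0 := by
      rw [incB_mul_transpose H, Matrix.add_mulVec, Matrix.smul_mulVec,
        Matrix.one_mulVec, hx]
      simp
    have h2 : ((incB H)ᵀ *ᵥ x) ⬝ᵥ ((incB H)ᵀ *ᵥ x) = 0 := by
      calc ((incB H)ᵀ *ᵥ x) ⬝ᵥ ((incB H)ᵀ *ᵥ x)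
          = (x ᵥ* incB H) ⬝ᵥ ((incB H)ᵀ *ᵥ x) := by rw [Matrix.mulVec_transpose]
        _ = x ⬝ᵥ (incB H *ᵥ ((incB H)ᵀ *ᵥ x)) := (Matrix.dotProduct_mulVec _ _ _).symm
        _ = x ⬝ᵥ ((incB H * (incB H)ᵀ) *ᵥ x) := by rw [Matrix.mulVec_mulVec]
        _ = 0 := by rw [h1, dotProduct_zero]
    exact dotProduct_self_eq_zero.1 h2
  · intro hx
    have h1 : (incB H * (incB H)ᵀ) *ᵥ x = 0 := by
      rw [← Matrix.mulVec_mulVec, hx, Matrix.mulVec_zero]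
    rw [incB_mul_transpose H, Matrix.add_mulVec, Matrix.smul_mulVec,
      Matrix.one_mulVec] at h1
    have := eq_neg_of_add_eq_zero_left h1
    rw [this]
    module

end Aux

/-- For a finite, simple, connected graph `H` with at least one edge, the
dimension of the `(-2)`-eigenspace of the adjacency matrix of the line graph `L(H)` equals
`|E'| - |V'| + β`, where `β = 1` if `H` is bipartite (2-colorable) and `β = 0` otherwise;
in particular `-2` is an eigenvalue iff `|E'| - |V'| + β > 0`. -/
theorem lineGraph_adjMatrix_neg_two_eigenspace_dim
    {V : Type*} [Fintype V] [DecidableEq V] (H : SimpleGraph V) [DecidableRel H.Adj]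
    [DecidableRel H.lineGraph.Adj]
    (hconn : H.Connected) (hE : H.edgeFinset.Nonempty)
    (β : ℤ) (hβ : β = if H.Colorable 2 then 1 else 0) :
    (Module.finrank ℝ
        ↥(Module.End.eigenspace (Matrix.toLin' (H.lineGraph.adjMatrix ℝ)) (-2)) : ℤ) =
      (H.edgeFinset.card : ℤ) - (Fintype.card V : ℤ) + β ∧
    (Module.End.HasEigenvalue (Matrix.toLin' (H.lineGraph.adjMatrix ℝ)) (-2) ↔
      0 < (H.edgeFinset.card : ℤ) - (Fintype.card V : ℤ) + β) := by
  have h1 : Matrix.rank ((incB H)ᵀ)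
        + Module.finrank ℝ (LinearMap.ker ((incB H)ᵀ).mulVecLin)
      = Fintype.card H.edgeSet := by
    rw [Matrix.rank]
    rw [LinearMap.finrank_range_add_finrank_ker ((incB H)ᵀ).mulVecLin,
      Module.finrank_fintype_fun_eq_card]
  have h2 : Matrix.rank (incB H)
        + Module.finrank ℝ (LinearMap.ker (incB H).mulVecLin)
      = Fintype.card V := by
    rw [Matrix.rank]
    rw [LinearMap.finrank_range_add_finrank_ker (incB H).mulVecLin,
      Module.finrank_fintype_fun_eq_card]
  have h3 : Matrix.rank ((incB H)ᵀ) = Matrix.rank (incB H) := Matrix.rank_transpose _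
  have h4 := finrank_ker_incB H hconn
  have hcard : H.edgeFinset.card = Fintype.card H.edgeSet := Set.toFinset_card _
  have hes := eigenspace_eq_ker H
  have hβk : (Module.finrank ℝ (LinearMap.ker (incB H).mulVecLin) : ℤ) = β := by
    rw [h4, hβ]; split_ifs <;> simp
  have hdim : (Module.finrank ℝ
      ↥(Module.End.eigenspace (Matrix.toLin' (H.lineGraph.adjMatrix ℝ)) (-2)) : ℤ) =
      (H.edgeFinset.card : ℤ) - (Fintype.card V : ℤ) + β := by
    rw [hes, ← hβk, hcard]
    omega
  refine ⟨hdim, ?_⟩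
  rw [Module.End.hasEigenvalue_iff, ← hdim]
  constructor
  · intro hne
    have : Module.finrank ℝ
        ↥(Module.End.eigenspace (Matrix.toLin' (H.lineGraph.adjMatrix ℝ)) (-2)) ≠ 0 :=
      fun h => hne (Submodule.finrank_eq_zero.1 h)
    omega
  · intro hpos h0
    rw [h0] at hpos
    simp at hpos
end

section
/- Let H be a finite, simple, connected graph with at least one edge and let G = L(H) be its line graph. Then −2 is an eigenvalue of the adjacency matrix A(G) if and only if H contains a cycle of even length, or H contains two cycles of odd length with distinct edge sets. -/
/-!
Let `B` be the vertex–edge incidence matrix of `H`. Then `A(L(H)) = Bᵀ B - 2`, so `-2` is an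
eigenvalue of `A(L(H))` exactly when `B u = 0` for some `u ≠ 0`.

A closed walk of even length that traverses some edge an odd number of times yields such a `u`:
put alternating signs `±1` on its successive edges. An even cycle is such a walk, and so is
`c ++ p ++ d ++ p.reverse` for two odd cycles `c`, `d` with different edge sets joined by a
walk `p`.

Conversely, suppose every cycle is odd. The kernel of `Bᵀ` consists of the `x` with
`x a = -x b` along every edge; on a connected graph it is at most one-dimensional, and it is
trivial as soon as there is an odd cycle. Hence `rank B ≥ |V| - 1`, so a nontrivial kernel of
`B` forces `|E| ≥ |V|`, then a cycle, hence `rank B = |V|` and `|E| > |V|`. Deleting an edge of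
one cycle leaves a connected graph with at least `|V|` edges, which contains a second cycle
avoiding that edge.
-/

open Finset Matrix Module

namespace SimpleGraph

variable {V R : Type*} {H : SimpleGraph V}

lemma Connected.exists_isCycle_of_card_le [Finite V] (hconn : H.Connected)
    (h : Nat.card V ≤ Nat.card H.edgeSet) : ∃ (v : V) (c : H.Walk v v), c.IsCycle := by
  by_contra! hac
  have := (isTree_iff_connected_and_card.1 ⟨hconn, hac⟩).2
  omega

lemma Connected.exists_isCycle_edges_toFinset_ne [Finite V] [DecidableEq V]
    (hconn : H.Connected) (h : Nat.card V < Nat.card H.edgeSet) :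
    ∃ (v w : V) (c : H.Walk v v) (d : H.Walk w w),
      c.IsCycle ∧ d.IsCycle ∧ c.edges.toFinset ≠ d.edges.toFinset := by
  obtain ⟨v, c, hc⟩ := hconn.exists_isCycle_of_card_le h.le
  obtain ⟨e, he, -⟩ :=
    (c.mem_support_iff_exists_mem_edges_of_not_nil hc.not_nil).1 c.start_mem_support
  induction e using Sym2.ind with | _ x y =>
  have hconn' := hconn.connected_delete_edge_of_not_isBridge fun hb =>
    hb.notMem_edges_of_isCycle hc he
  have hcard : Nat.card (H.deleteEdges {s(x, y)}).edgeSet + 1 = Nat.card H.edgeSet := by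
    rw [edgeSet_deleteEdges, Nat.card_coe_set_eq, Nat.card_coe_set_eq,
      Set.ncard_sdiff_singleton_add_one (c.edges_subset_edgeSet he)]
  obtain ⟨w, d, hd⟩ := hconn'.exists_isCycle_of_card_le (by omega)
  refine ⟨v, w, c, d.mapLe (deleteEdges_le _), hc, hd.mapLe _, fun heq => ?_⟩
  have hxy : s(x, y) ∈ d.edges := by
    simpa [heq, Walk.edges_mapLe_eq_edges] using List.mem_toFinset.2 he
  have := d.edges_subset_edgeSet hxy
  rw [edgeSet_deleteEdges] at this
  exact this.2 rfl

variable [DecidableEq V]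

variable (R) in
def Walk.signedEdgeVector [Ring R] : ∀ {x y : V}, H.Walk x y → H.edgeSet → R
  | _, _, .nil => 0
  | _, _, .cons h p => Pi.single ⟨_, H.mem_edgeSet.2 h⟩ 1 - p.signedEdgeVector

lemma Walk.signedEdgeVector_apply_ne_zero [Ring R] [CharZero R] {x y : V} (p : H.Walk x y)
    {e : H.edgeSet} (he : Odd (p.edges.count (e : Sym2 V))) : p.signedEdgeVector R e ≠ 0 := by
  have hparity : ∀ {x y : V} (p : H.Walk x y), ∃ m : ℤ,
      p.signedEdgeVector R e = p.edges.count ↑e + 2 * m := by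
    intro x y p
    induction p with
    | nil => exact ⟨0, by simp [signedEdgeVector]⟩
    | cons h p ih =>
      obtain ⟨m, hm⟩ := ih
      refine ⟨-m - p.edges.count ↑e, ?_⟩
      simp only [signedEdgeVector, Pi.sub_apply, hm, edges_cons, List.count_cons, Pi.single_apply,
        Subtype.ext_iff, beq_iff_eq, eq_comm (b := (e : Sym2 V))]
      split_ifs <;> push_cast <;> noncomm_ring
  obtain ⟨m, hm⟩ := hparity p
  obtain ⟨k, hk⟩ := he
  rw [hm]
  exact_mod_cast (show (p.edges.count ↑e + 2 * m : ℤ) ≠ 0 by omega)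

variable [DecidableRel H.Adj]

variable (R H) in
def edgeIncMatrix [Zero R] [One R] : Matrix V H.edgeSet R :=
  (H.incMatrix R).submatrix id (↑)

lemma edgeIncMatrix_apply [Zero R] [One R] (v : V) (e : H.edgeSet) :
    H.edgeIncMatrix R v e = if v ∈ (e : Sym2 V) then 1 else 0 := by
  simp [edgeIncMatrix, incMatrix_apply', incidenceSet, e.2]

lemma edgeIncMatrix_col [AddMonoidWithOne R] {a b : V} (h : H.Adj a b) :
    (H.edgeIncMatrix R).col ⟨s(a, b), h⟩ = Pi.single a 1 + Pi.single b 1 := by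
  have hab := h.ne
  ext v
  by_cases hva : v = a <;> by_cases hvb : v = b <;> simp_all [edgeIncMatrix_apply]

section

variable [Fintype H.edgeSet]

lemma Walk.edgeIncMatrix_mulVec_signedEdgeVector [Ring R] {x y : V} (p : H.Walk x y) :
    H.edgeIncMatrix R *ᵥ p.signedEdgeVector R =
      Pi.single x 1 - (-1) ^ p.length • Pi.single y 1 := by
  induction p with
  | nil => simp [signedEdgeVector]
  | cons h p ih =>
    rw [signedEdgeVector, mulVec_sub, ih, mulVec_single_one, edgeIncMatrix_col h, length_cons,
      pow_succ]
    simp only [mul_neg, mul_one, neg_smul]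
    abel

lemma Walk.exists_ne_zero_edgeIncMatrix_mulVec_eq_zero [Ring R] [CharZero R] {v : V}
    (p : H.Walk v v) (hp : Even p.length) {e : H.edgeSet} (he : Odd (p.edges.count (e : Sym2 V))) :
    ∃ u : H.edgeSet → R, u ≠ 0 ∧ H.edgeIncMatrix R *ᵥ u = 0 :=
  ⟨p.signedEdgeVector R, fun h => p.signedEdgeVector_apply_ne_zero he (congrFun h e), by
    rw [p.edgeIncMatrix_mulVec_signedEdgeVector, hp.neg_one_pow, one_smul, sub_self]⟩

lemma Walk.IsCycle.exists_ne_zero_edgeIncMatrix_mulVec_eq_zero [Ring R] [CharZero R] {v : V}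
    {c : H.Walk v v} (hc : c.IsCycle) (hev : Even c.length) :
    ∃ u : H.edgeSet → R, u ≠ 0 ∧ H.edgeIncMatrix R *ᵥ u = 0 := by
  obtain ⟨e, he, -⟩ :=
    (c.mem_support_iff_exists_mem_edges_of_not_nil hc.not_nil).1 c.start_mem_support
  exact c.exists_ne_zero_edgeIncMatrix_mulVec_eq_zero hev (e := ⟨e, c.edges_subset_edgeSet he⟩)
    (by rw [hc.isTrail.count_edges_eq_one he]; exact odd_one)

open Walk in
lemma Reachable.exists_ne_zero_edgeIncMatrix_mulVec_eq_zero_of_odd [Ring R] [CharZero R]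
    {v w : V} (hvw : H.Reachable v w) {c : H.Walk v v} {d : H.Walk w w} (hc : c.IsTrail)
    (hd : d.IsTrail) (hco : Odd c.length) (hdo : Odd d.length)
    (hne : c.edges.toFinset ≠ d.edges.toFinset) :
    ∃ u : H.edgeSet → R, u ≠ 0 ∧ H.edgeIncMatrix R *ᵥ u = 0 := by
  obtain ⟨p⟩ := hvw
  obtain ⟨e, he⟩ :
      ∃ e, (e ∈ c.edges ∧ e ∉ d.edges) ∨ (e ∈ d.edges ∧ e ∉ c.edges) := by
    by_contra! h
    exact hne (Finset.ext fun e => by simpa using ⟨(h e).1, (h e).2⟩)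
  have heE : e ∈ H.edgeSet := by
    rcases he with ⟨he, -⟩ | ⟨he, -⟩
    exacts [c.edges_subset_edgeSet he, d.edges_subset_edgeSet he]
  refine (c.append (p.append (d.append p.reverse))).exists_ne_zero_edgeIncMatrix_mulVec_eq_zero
    (e := ⟨e, heE⟩) ?_ ?_
  · simp only [length_append, length_reverse]
    obtain ⟨k, hk⟩ := hco
    obtain ⟨l, hl⟩ := hdo
    exact ⟨k + l + 1 + p.length, by omega⟩
  · simp only [edges_append, edges_reverse, List.count_append, List.count_reverse]
    rcases he with ⟨h1, h2⟩ | ⟨h1, h2⟩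
    · rw [hc.count_edges_eq_one h1, List.count_eq_zero_of_not_mem h2]
      exact ⟨p.edges.count e, by ring⟩
    · rw [hd.count_edges_eq_one h1, List.count_eq_zero_of_not_mem h2]
      exact ⟨p.edges.count e, by ring⟩

end

variable [Fintype V]

lemma vecMul_edgeIncMatrix_apply [NonAssocSemiring R] (x : V → R) {a b : V} (h : H.Adj a b) :
    (x ᵥ* H.edgeIncMatrix R) ⟨s(a, b), h⟩ = x a + x b := by
  change x ⬝ᵥ (H.edgeIncMatrix R).col _ = _
  rw [edgeIncMatrix_col h, dotProduct_add, dotProduct_single_one, dotProduct_single_one]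

lemma Walk.apply_eq_neg_one_pow_length_mul [Ring R] {x : V → R}
    (hx : x ᵥ* H.edgeIncMatrix R = 0) {a b : V} (p : H.Walk a b) :
    x b = (-1) ^ p.length * x a := by
  induction p with
  | nil => simp
  | @cons a b c h p ih =>
    have hab : x a + x b = 0 := by rw [← vecMul_edgeIncMatrix_apply x h, hx, Pi.zero_apply]
    rw [ih, eq_neg_of_add_eq_zero_right hab, length_cons, pow_succ, mul_neg_one, neg_mul, mul_neg]

lemma transpose_edgeIncMatrix_mul_self [NonAssocSemiring R] [DecidableRel H.lineGraph.Adj] :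
    (H.edgeIncMatrix R)ᵀ * H.edgeIncMatrix R = H.lineGraph.adjMatrix R + 2 := by
  ext e f
  obtain rfl | hef := eq_or_ne e f
  · have := incMatrix_transpose_mul_diag (R := R) (G := H) (e := e)
    simp_all [edgeIncMatrix, Matrix.mul_apply, ofNat_apply]
  have hcard : #{v | v ∈ (e : Sym2 V) ∧ v ∈ (f : Sym2 V)} ≤ 1 :=
    card_le_one.2 fun v hv w hw => by_contra fun hvw =>
      hef (Subtype.ext (Sym2.eq_of_ne_mem hvw (mem_filter.1 hv).2.1 (mem_filter.1 hw).2.1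
        (mem_filter.1 hv).2.2 (mem_filter.1 hw).2.2))
  simp only [Matrix.mul_apply, transpose_apply, edgeIncMatrix_apply, ite_zero_mul_ite_zero,
    one_mul, sum_boole, Matrix.add_apply, adjMatrix_apply, lineGraph_adj_iff_exists, ne_eq, hef,
    not_false_eq_true, true_and]
  rw [ofNat_apply, if_neg hef, Nat.cast_zero, add_zero]
  split_ifs with hvw
  · obtain ⟨v, hve, hvf⟩ := hvw
    rw [le_antisymm hcard (card_pos.2 ⟨v, by simp [hve, hvf]⟩), Nat.cast_one]
  · rw [card_eq_zero.2 (filter_eq_empty_iff.2 fun v _ hv => hvw ⟨v, hv⟩), Nat.cast_zero]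

lemma lineGraph_adjMatrix_mulVec_eq_neg_two_smul_iff [Field R] [LinearOrder R]
    [IsStrictOrderedRing R] [Fintype H.edgeSet] [DecidableRel H.lineGraph.Adj]
    {u : H.edgeSet → R} :
    H.lineGraph.adjMatrix R *ᵥ u = (-2 : R) • u ↔ H.edgeIncMatrix R *ᵥ u = 0 := by
  have hker := SetLike.ext_iff.1 (ker_mulVecLin_transpose_mul_self (H.edgeIncMatrix R)) u
  simp only [LinearMap.mem_ker, mulVecLin_apply, transpose_edgeIncMatrix_mul_self,
    add_mulVec, ofNat_mulVec] at hker
  rw [← hker, ← sub_eq_zero, neg_smul, sub_neg_eq_add]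

variable [Field R]

lemma mem_ker_transpose_edgeIncMatrix {x : V → R} :
    x ∈ LinearMap.ker (H.edgeIncMatrix R)ᵀ.mulVecLin ↔ x ᵥ* H.edgeIncMatrix R = 0 := by
  rw [LinearMap.mem_ker, mulVecLin_apply, mulVec_transpose]

lemma Connected.finrank_ker_transpose_edgeIncMatrix_le_one (hconn : H.Connected) :
    finrank R (LinearMap.ker (H.edgeIncMatrix R)ᵀ.mulVecLin) ≤ 1 := by
  obtain ⟨r⟩ := hconn.nonempty
  let K := LinearMap.ker (H.edgeIncMatrix R)ᵀ.mulVecLin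
  have hinj : Function.Injective ((LinearMap.proj r : (V → R) →ₗ[R] R) ∘ₗ K.subtype) := by
    refine (injective_iff_map_eq_zero _).2 fun x hx => Subtype.ext <| funext fun v => ?_
    obtain ⟨p⟩ := hconn r v
    rw [p.apply_eq_neg_one_pow_length_mul (mem_ker_transpose_edgeIncMatrix.1 x.2)]
    simp_all
  simpa using LinearMap.finrank_le_finrank_of_injective hinj

lemma Connected.ker_transpose_edgeIncMatrix_eq_bot [CharZero R] (hconn : H.Connected) {v : V}
    {c : H.Walk v v} (hc : Odd c.length) :
    LinearMap.ker (H.edgeIncMatrix R)ᵀ.mulVecLin = ⊥ := by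
  refine (Submodule.eq_bot_iff _).2 fun x hx => funext fun w => ?_
  have hx := mem_ker_transpose_edgeIncMatrix.1 hx
  have hv : x v = 0 := self_eq_neg.1 <| by
    simpa [hc.neg_one_pow] using c.apply_eq_neg_one_pow_length_mul hx
  obtain ⟨p⟩ := hconn v w
  rw [p.apply_eq_neg_one_pow_length_mul hx, hv, mul_zero, Pi.zero_apply]

lemma rank_edgeIncMatrix_add_finrank_ker_transpose [Fintype H.edgeSet] :
    (H.edgeIncMatrix R).rank + finrank R (LinearMap.ker (H.edgeIncMatrix R)ᵀ.mulVecLin) =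
      Fintype.card V := by
  rw [← rank_transpose, Matrix.rank, LinearMap.finrank_range_add_finrank_ker,
    finrank_fintype_fun_eq_card]

lemma Connected.card_lt_card_edgeSet_of_mulVec_eq_zero [Fintype H.edgeSet] [CharZero R]
    (hconn : H.Connected) (hodd : ∀ (v : V) (c : H.Walk v v), c.IsCycle → Odd c.length)
    {u : H.edgeSet → R} (hu : u ≠ 0) (hBu : H.edgeIncMatrix R *ᵥ u = 0) :
    Nat.card V < Nat.card H.edgeSet := by
  have hker : finrank R (LinearMap.ker (H.edgeIncMatrix R).mulVecLin) ≠ 0 := fun h =>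
    hu <| (Submodule.eq_bot_iff _).1 (Submodule.finrank_eq_zero.1 h) u hBu
  have hrank := LinearMap.finrank_range_add_finrank_ker (H.edgeIncMatrix R).mulVecLin
  rw [finrank_fintype_fun_eq_card, ← Matrix.rank] at hrank
  have hsum := rank_edgeIncMatrix_add_finrank_ker_transpose (H := H) (R := R)
  have hle := hconn.finrank_ker_transpose_edgeIncMatrix_le_one (R := R)
  rw [Nat.card_eq_fintype_card, Nat.card_eq_fintype_card]
  obtain ⟨v, c, hc⟩ := hconn.exists_isCycle_of_card_le (by
    rw [Nat.card_eq_fintype_card, Nat.card_eq_fintype_card]; omega)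
  rw [hconn.ker_transpose_edgeIncMatrix_eq_bot (hodd v c hc), finrank_bot] at hsum
  omega

end SimpleGraph

theorem lineGraph_adjMatrix_has_eigenvalue_neg_two_iff_general
    {V : Type*} [Fintype V] [DecidableEq V] (H : SimpleGraph V) [DecidableRel H.Adj]
    [DecidableRel H.lineGraph.Adj]
    (hconn : H.Connected) :
    (∃ u : H.edgeSet → ℝ, u ≠ 0 ∧
        (H.lineGraph.adjMatrix ℝ).mulVec u = (-2 : ℝ) • u) ↔
    ((∃ (v : V) (c : H.Walk v v), c.IsCycle ∧ Even c.length) ∨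
      (∃ (v w : V) (c : H.Walk v v) (d : H.Walk w w),
        c.IsCycle ∧ d.IsCycle ∧ Odd c.length ∧ Odd d.length ∧
        c.edges.toFinset ≠ d.edges.toFinset)) := by
  simp_rw [SimpleGraph.lineGraph_adjMatrix_mulVec_eq_neg_two_smul_iff]
  constructor
  · rintro ⟨u, hu, hBu⟩
    refine or_iff_not_imp_left.2 fun hEven => ?_
    have hodd : ∀ (v : V) (c : H.Walk v v), c.IsCycle → Odd c.length := fun v c hc =>
      Nat.not_even_iff_odd.1 fun h => hEven ⟨v, c, hc, h⟩
    obtain ⟨v, w, c, d, hc, hd, hne⟩ := hconn.exists_isCycle_edges_toFinset_ne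
      (hconn.card_lt_card_edgeSet_of_mulVec_eq_zero hodd hu hBu)
    exact ⟨v, w, c, d, hc, hd, hodd v c hc, hodd w d hd, hne⟩
  · rintro (⟨v, c, hc, hev⟩ | ⟨v, w, c, d, hc, hd, hco, hdo, hne⟩)
    · exact hc.exists_ne_zero_edgeIncMatrix_mulVec_eq_zero hev
    · exact (hconn v w).exists_ne_zero_edgeIncMatrix_mulVec_eq_zero_of_odd hc.isTrail hd.isTrail
        hco hdo hne

/-- For a finite, simple, connected graph `H` with at least one edge, `-2`
is an eigenvalue of the adjacency matrix of the line graph `L(H)` if and only if `H`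
contains a cycle of even length, or two cycles of odd length with distinct edge sets. -/
theorem lineGraph_adjMatrix_has_eigenvalue_neg_two_iff
    {V : Type*} [Fintype V] [DecidableEq V] (H : SimpleGraph V) [DecidableRel H.Adj]
    [DecidableRel H.lineGraph.Adj]
    (hconn : H.Connected) (hE : H.edgeFinset.Nonempty) :
    (∃ u : H.edgeSet → ℝ, u ≠ 0 ∧
        (H.lineGraph.adjMatrix ℝ).mulVec u = (-2 : ℝ) • u) ↔
    ((∃ (v : V) (c : H.Walk v v), c.IsCycle ∧ Even c.length) ∨
      (∃ (v w : V) (c : H.Walk v v) (d : H.Walk w w),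
        c.IsCycle ∧ d.IsCycle ∧ Odd c.length ∧ Odd d.length ∧
        c.edges.toFinset ≠ d.edges.toFinset)) :=
  lineGraph_adjMatrix_has_eigenvalue_neg_two_iff_general H hconn
end

section
/- Let H be a finite, simple, connected graph with at least two edges, let G = L(H) be its line graph with vertex set V, let A be the adjacency matrix of G, and let Δ = deg_max(G). Then for every p ∈ [2,∞] and every t ≥ 0, the operator norm of exp(−tA) on ℓ^p(V) satisfies ‖exp(−tA)‖_{L(ℓ^p)} ≤ exp(t·(4/p + (1 − 2/p)·Δ)) (for p = ∞ the exponent is read as t·Δ). -/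
open scoped ENNReal

/-!
For `p = ∞` this is Grönwall's inequality for `‖e^{-sA} x‖_∞`: the row sums of `A` are at most
`Δ`, so `‖A y‖_∞ ≤ Δ ‖y‖_∞`.

For `q = p < ∞` put `y(s) = e^{-sA} x` and `F(s) = ∑ᵢ |yᵢ|^q`, so that
`F' = -q ⟪A y, J y⟫` with `J u = |u|^{q-2} u`. Symmetrising over the pairs `(i, j)` and using a
two-point inequality (weighted AM–GM) gives
`⟪A y, J y⟫ ≥ (2/q) ⟪v, A v⟫ - (1 - 2/q) ∑ᵢ deg(i) |yᵢ|^q`, where `vᵢ = |yᵢ|^{(q-2)/2} yᵢ`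
satisfies `vᵢ² = |yᵢ|^q`. For a line graph `A + 2 = Bᵀ B` with `B` the vertex–edge incidence
matrix, so `⟪v, A v⟫ ≥ -2 ∑ᵢ vᵢ²`. Hence `F' ≤ q (4/q + (1 - 2/q) Δ) F`, and Grönwall again
finishes the proof.
-/

open Finset Matrix

namespace Real

variable {q x y : ℝ}

theorem mul_mul_rpow_sub_two_le (hq : 2 ≤ q) (hx : 0 ≤ x) (hy : 0 ≤ y) :
    x * y * x ^ (q - 2) ≤ 2 / q * (x ^ (q / 2) * y ^ (q / 2)) + (1 - 2 / q) * x ^ q := by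
  have hq0 : 0 < q := by linarith
  have hxy : (x ^ (q / 2) * y ^ (q / 2)) ^ (2 / q) = x * y := by
    rw [mul_rpow (by positivity) (by positivity), ← rpow_mul hx, ← rpow_mul hy,
      div_mul_div_cancel₀' hq0.ne', div_self two_ne_zero, rpow_one, rpow_one]
  have hxx : (x ^ q) ^ (1 - 2 / q) = x ^ (q - 2) := by
    rw [← rpow_mul hx]; congr 1; field_simp
  simpa only [hxy, hxx] using geom_mean_le_arith_mean2_weighted
    (p₁ := x ^ (q / 2) * y ^ (q / 2)) (p₂ := x ^ q) (by positivity)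
    (sub_nonneg.2 ((div_le_one hq0).2 hq)) (by positivity) (by positivity) (add_sub_cancel _ 1)

theorem rpow_sub_two_eq_sq (hx : 0 ≤ x) : x ^ (q - 2) = (x ^ ((q - 2) / 2)) ^ 2 := by
  rw [← rpow_mul_natCast hx]; norm_num

theorem rpow_div_two_eq_mul (hq : q ≠ 0) (hx : 0 ≤ x) :
    x ^ (q / 2) = x * x ^ ((q - 2) / 2) := by
  rw [← rpow_one_add' hx (by contrapose! hq; linarith)]; ring_nf

theorem rpow_eq_sq_mul (hq : q ≠ 0) (hx : 0 ≤ x) : x ^ q = (x * x ^ ((q - 2) / 2)) ^ 2 := by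
  rw [← rpow_div_two_eq_mul hq hx, ← rpow_mul_natCast hx]; norm_num

theorem four_div_mul_abs_rpow_mul_le (hq : 2 ≤ q) (u w : ℝ) :
    4 / q * ((|u| ^ ((q - 2) / 2) * u) * (|w| ^ ((q - 2) / 2) * w)) ≤
      u * (|w| ^ (q - 2) * w) + w * (|u| ^ (q - 2) * u) + (1 - 2 / q) * (|u| ^ q + |w| ^ q) := by
  have hq0 : 0 < q := by linarith
  have h2q : 0 ≤ 1 - 2 / q := sub_nonneg.2 ((div_le_one hq0).2 hq)
  have hu := mul_mul_rpow_sub_two_le hq (abs_nonneg u) (abs_nonneg w)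
  have hw := mul_mul_rpow_sub_two_le hq (abs_nonneg w) (abs_nonneg u)
  set c := |u| ^ ((q - 2) / 2) with hc
  set d := |w| ^ ((q - 2) / 2) with hd
  simp only [rpow_sub_two_eq_sq (abs_nonneg _), rpow_div_two_eq_mul hq0.ne' (abs_nonneg _),
    rpow_eq_sq_mul hq0.ne' (abs_nonneg _), ← hc, ← hd] at hu hw ⊢
  suffices 4 / q * (c * d) * (u * w) ≤
      (u * w) * (c ^ 2 + d ^ 2) + (1 - 2 / q) * ((|u| * c) ^ 2 + (|w| * d) ^ 2) by
    linarith
  rcases le_or_gt 0 (u * w) with huw | huw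
  · have hcd : 0 ≤ c * d := by positivity
    linear_combination mul_nonneg huw (sq_nonneg (c - d)) +
      mul_nonneg h2q (by positivity : 0 ≤ (|u| * c) ^ 2 + (|w| * d) ^ 2) +
      2 * mul_nonneg (mul_nonneg h2q huw) hcd
  · rw [← neg_neg (u * w), ← abs_of_neg huw, abs_mul]
    linear_combination hu + hw

end Real

theorem le_mul_exp_of_hasDerivAt_le_mul {f f' : ℝ → ℝ} {K t : ℝ}
    (hf : ∀ s, HasDerivAt f (f' s) s) (hbound : ∀ s, f' s ≤ K * f s) (ht : 0 ≤ t) :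
    f t ≤ f 0 * Real.exp (K * t) := by
  have := le_gronwallBound_of_liminf_deriv_right_le (f := f) (f' := f') (ε := 0) (a := 0)
    (b := t) (fun s _ => (hf s).continuousAt.continuousWithinAt)
    (fun s _ _ hr => (hf s).hasDerivWithinAt.liminf_right_slope_le hr) le_rfl
    (fun s _ => by simpa using hbound s) t ⟨ht, le_rfl⟩
  rwa [sub_zero, gronwallBound_ε0] at this

namespace Matrix

variable {n : Type*} [Fintype n]

theorem IsSymm.dotProduct_mulVec_comm {A : Matrix n n ℝ} (hA : A.IsSymm) (f g : n → ℝ) :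
    f ⬝ᵥ A *ᵥ g = g ⬝ᵥ A *ᵥ f := by
  rw [dotProduct_mulVec, ← mulVec_transpose, hA.eq, dotProduct_comm]

theorem neg_mul_sum_abs_rpow_le_sum_mulVec_mul {A : Matrix n n ℝ} {μ Δ q : ℝ}
    (hA : A.IsSymm) (hA0 : ∀ i j, 0 ≤ A i j) (hrow : ∀ i, ∑ j, A i j ≤ Δ)
    (hquad : ∀ v, -μ * ∑ i, v i ^ 2 ≤ v ⬝ᵥ A *ᵥ v) (hq : 2 ≤ q) (y : n → ℝ) :
    -(2 / q * μ + (1 - 2 / q) * Δ) * ∑ i, |y i| ^ q ≤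
      ∑ i, (A *ᵥ y) i * (|y i| ^ (q - 2) * y i) := by
  have hq0 : 0 < q := by linarith
  set J : n → ℝ := fun i => |y i| ^ (q - 2) * y i
  set v : n → ℝ := fun i => |y i| ^ ((q - 2) / 2) * y i
  set Φ : n → ℝ := fun i => |y i| ^ q
  have hv : ∑ i, v i ^ 2 = ∑ i, Φ i := sum_congr rfl fun i _ => by
    simp only [v, Φ, Real.rpow_eq_sq_mul hq0.ne' (abs_nonneg _), mul_pow, sq_abs]; ring
  have hpair : ∑ i, ∑ j, A i j * (4 / q * (v i * v j)) ≤
      ∑ i, ∑ j, A i j * (J i * y j + y i * J j + (1 - 2 / q) * (Φ i * 1 + 1 * Φ j)) := by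
    refine sum_le_sum fun i _ => sum_le_sum fun j _ => mul_le_mul_of_nonneg_left ?_ (hA0 i j)
    linarith [Real.four_div_mul_abs_rpow_mul_le hq (y i) (y j)]
  have hLHS : ∑ i, ∑ j, A i j * (4 / q * (v i * v j)) = 4 / q * (v ⬝ᵥ A *ᵥ v) := by
    simp only [dotProduct, mulVec, mul_sum]
    exact sum_congr rfl fun i _ => sum_congr rfl fun j _ => by ring
  have hRHS : ∑ i, ∑ j, A i j * (J i * y j + y i * J j + (1 - 2 / q) * (Φ i * 1 + 1 * Φ j)) =
      J ⬝ᵥ A *ᵥ y + y ⬝ᵥ A *ᵥ J + (1 - 2 / q) * (Φ ⬝ᵥ A *ᵥ 1 + 1 ⬝ᵥ A *ᵥ Φ) := by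
    simp only [dotProduct, mulVec, mul_add, mul_sum, ← sum_add_distrib, Pi.one_apply]
    exact sum_congr rfl fun i _ => sum_congr rfl fun j _ => by ring
  rw [hLHS, hRHS, hA.dotProduct_mulVec_comm y, hA.dotProduct_mulVec_comm 1] at hpair
  have hdeg : Φ ⬝ᵥ A *ᵥ 1 ≤ Δ * ∑ i, Φ i := by
    simp only [dotProduct, mul_sum]
    refine sum_le_sum fun i _ => ?_
    simpa [mulVec, dotProduct, mul_comm] using
      mul_le_mul_of_nonneg_left (hrow i) (by positivity : 0 ≤ Φ i)
  have hquad' := mul_le_mul_of_nonneg_left (hquad v) (by positivity : 0 ≤ 4 / q)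
  have hdeg' := mul_le_mul_of_nonneg_left hdeg (sub_nonneg.2 ((div_le_one hq0).2 hq))
  rw [hv] at hquad'
  change _ ≤ (A *ᵥ y) ⬝ᵥ J
  rw [dotProduct_comm]
  linear_combination (hquad' + hpair) / 2 + hdeg'

variable [DecidableEq n]

theorem hasDerivAt_exp_smul_mulVec (B : Matrix n n ℝ) (x : n → ℝ) (s : ℝ) :
    HasDerivAt (fun s : ℝ => NormedSpace.exp (s • B) *ᵥ x)
      (B *ᵥ (NormedSpace.exp (s • B) *ᵥ x)) s := by
  let _ : NormedRing (Matrix n n ℝ) := Matrix.linftyOpNormedRing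
  let _ : NormedAlgebra ℝ (Matrix n n ℝ) := Matrix.linftyOpNormedAlgebra
  rw [mulVec_mulVec]
  exact ((mulVecBilin ℝ ℝ).flip x).toContinuousLinearMap.hasFDerivAt.comp_hasDerivAt s
    (hasDerivAt_exp_smul_const' B s)

theorem sum_abs_rpow_exp_neg_smul_mulVec_le {A : Matrix n n ℝ} {c q : ℝ} (hq : 1 < q)
    (hA : ∀ y : n → ℝ, -c * ∑ i, |y i| ^ q ≤ ∑ i, (A *ᵥ y) i * (|y i| ^ (q - 2) * y i))
    (x : n → ℝ) {t : ℝ} (ht : 0 ≤ t) :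
    ∑ i, |(NormedSpace.exp (-(t • A)) *ᵥ x) i| ^ q ≤
      (∑ i, |x i| ^ q) * Real.exp (q * c * t) := by
  let y (s : ℝ) : n → ℝ := NormedSpace.exp (s • -A) *ᵥ x
  have hderiv (s : ℝ) : HasDerivAt (fun s => ∑ i, |y s i| ^ q)
      (∑ i, q * |y s i| ^ (q - 2) * y s i * (-A *ᵥ y s) i) s :=
    HasDerivAt.fun_sum fun i _ => (hasDerivAt_abs_rpow _ hq).comp s
      (hasDerivAt_pi.1 (hasDerivAt_exp_smul_mulVec (-A) x s) i)
  have hbound (s : ℝ) : ∑ i, q * |y s i| ^ (q - 2) * y s i * (-A *ᵥ y s) i ≤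
      q * c * ∑ i, |y s i| ^ q := by
    have hsum : ∑ i, q * |y s i| ^ (q - 2) * y s i * (-A *ᵥ y s) i =
        -(q * ∑ i, (A *ᵥ y s) i * (|y s i| ^ (q - 2) * y s i)) := by
      simp only [neg_mulVec, Pi.neg_apply, mul_sum, ← sum_neg_distrib]
      exact sum_congr rfl fun i _ => by ring
    rw [hsum]
    linarith [mul_le_mul_of_nonneg_left (hA (y s)) (by linarith : 0 ≤ q)]
  simpa [y, smul_neg] using le_mul_exp_of_hasDerivAt_le_mul hderiv hbound ht

theorem norm_toLp_exp_neg_smul_mulVec_le (p : ℝ≥0∞) [Fact (1 ≤ p)] {A : Matrix n n ℝ}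
    {c : ℝ} (hp : 1 < p.toReal)
    (hA : ∀ y : n → ℝ, -c * ∑ i, |y i| ^ p.toReal ≤
      ∑ i, (A *ᵥ y) i * (|y i| ^ (p.toReal - 2) * y i))
    (x : n → ℝ) {t : ℝ} (ht : 0 ≤ t) :
    ‖WithLp.toLp p (NormedSpace.exp (-(t • A)) *ᵥ x)‖ ≤
      Real.exp (c * t) * ‖WithLp.toLp p x‖ := by
  have hp0 : 0 < p.toReal := by linarith
  simp only [PiLp.norm_eq_sum hp0, Real.norm_eq_abs]
  calc (∑ i, |(NormedSpace.exp (-(t • A)) *ᵥ x) i| ^ p.toReal) ^ (1 / p.toReal)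
      ≤ ((∑ i, |x i| ^ p.toReal) * Real.exp (p.toReal * c * t)) ^ (1 / p.toReal) := by
        gcongr
        exact sum_abs_rpow_exp_neg_smul_mulVec_le hp hA x ht
    _ = Real.exp (c * t) * (∑ i, |x i| ^ p.toReal) ^ (1 / p.toReal) := by
        rw [Real.mul_rpow (by positivity) (by positivity), ← Real.exp_mul, mul_comm]
        congr 2
        field_simp

theorem norm_exp_neg_smul_mulVec_le {A : Matrix n n ℝ} {C : ℝ}
    (hA : ∀ y, ‖A *ᵥ y‖ ≤ C * ‖y‖) (x : n → ℝ) {t : ℝ} (ht : 0 ≤ t) :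
    ‖NormedSpace.exp (-(t • A)) *ᵥ x‖ ≤ Real.exp (C * t) * ‖x‖ := by
  have hderiv := hasDerivAt_exp_smul_mulVec (-A) x
  have := norm_le_gronwallBound_of_norm_deriv_right_le (a := 0) (b := t) (δ := ‖x‖) (K := C)
    (ε := 0) (fun s _ => (hderiv s).continuousAt.continuousWithinAt)
    (fun s _ => (hderiv s).hasDerivWithinAt) (by simp)
    (fun s _ => by simpa only [neg_mulVec, norm_neg, add_zero] using hA _) t ⟨ht, le_rfl⟩
  rwa [sub_zero, gronwallBound_ε0, smul_neg, mul_comm] at this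

end Matrix

namespace SimpleGraph

section maxDegree

variable {W : Type*} [Fintype W] (G : SimpleGraph W) [DecidableRel G.Adj]

theorem sum_adjMatrix_apply_le_maxDegree (v : W) : ∑ w, G.adjMatrix ℝ v w ≤ G.maxDegree := by
  calc ∑ w, G.adjMatrix ℝ v w = G.degree v := by
        simpa [mulVec, dotProduct] using G.adjMatrix_mulVec_const_apply (a := (1 : ℝ)) (v := v)
    _ ≤ G.maxDegree := by exact_mod_cast G.degree_le_maxDegree v

theorem norm_adjMatrix_mulVec_le (y : W → ℝ) : ‖G.adjMatrix ℝ *ᵥ y‖ ≤ G.maxDegree * ‖y‖ := by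
  refine (pi_norm_le_iff_of_nonneg (by positivity)).2 fun v => ?_
  rw [adjMatrix_mulVec_apply]
  calc ‖∑ u ∈ G.neighborFinset v, y u‖ ≤ ∑ u ∈ G.neighborFinset v, ‖y‖ :=
        norm_sum_le_of_le _ fun u _ => norm_le_pi_norm y u
    _ = G.degree v * ‖y‖ := by simp
    _ ≤ G.maxDegree * ‖y‖ := by gcongr; exact_mod_cast G.degree_le_maxDegree v

end maxDegree

variable {V : Type*} [Fintype V] [DecidableEq V] (H : SimpleGraph V)
  [DecidableRel H.lineGraph.Adj]

theorem card_filter_mem_mem_edgeSet (e f : H.edgeSet) :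
    (#{v | v ∈ (e : Sym2 V) ∧ v ∈ (f : Sym2 V)} : ℝ) =
      H.lineGraph.adjMatrix ℝ e f + if e = f then 2 else 0 := by
  obtain ⟨e, he⟩ := e
  induction e using Sym2.ind with | _ a b => ?_
  have hab : a ≠ b := H.ne_of_adj he
  have hcard : (#{v | v ∈ s(a, b) ∧ v ∈ (f : Sym2 V)} : ℝ) =
      (if a ∈ (f : Sym2 V) then 1 else 0) + if b ∈ (f : Sym2 V) then 1 else 0 := by
    rw [← filter_filter, show filter (· ∈ s(a, b)) univ = {a, b} by ext; simp,
      card_filter, sum_pair hab]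
    push_cast
    rfl
  simp only [hcard, adjMatrix_apply, lineGraph_adj_iff_exists]
  by_cases hef : ⟨s(a, b), he⟩ = f
  · subst hef
    simp [one_add_one_eq_two]
  · have hnot : ¬(a ∈ (f : Sym2 V) ∧ b ∈ (f : Sym2 V)) := fun h =>
      hef (Subtype.ext ((Sym2.mem_and_mem_iff hab).1 h).symm)
    by_cases ha : a ∈ (f : Sym2 V) <;> by_cases hb : b ∈ (f : Sym2 V) <;> simp_all

variable [DecidableRel H.Adj]

theorem lineGraph_adjMatrix_add_two :
    H.lineGraph.adjMatrix ℝ + 2 =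
      ((H.incMatrix ℝ).submatrix id (↑))ᵀ * (H.incMatrix ℝ).submatrix id (↑) := by
  ext e f
  rw [Matrix.add_apply, ofNat_apply, mul_apply]
  push_cast
  rw [← card_filter_mem_mem_edgeSet, natCast_card_filter]
  refine sum_congr rfl fun v _ => ?_
  by_cases hv : v ∈ (e : Sym2 V) <;> simp [hv, incMatrix_apply', incidenceSet]

theorem neg_two_mul_sum_sq_le_dotProduct_lineGraph_adjMatrix_mulVec (v : H.edgeSet → ℝ) :
    -2 * ∑ e, v e ^ 2 ≤ v ⬝ᵥ H.lineGraph.adjMatrix ℝ *ᵥ v := by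
  have := (posSemidef_conjTranspose_mul_self
    ((H.incMatrix ℝ).submatrix id ((↑) : H.edgeSet → Sym2 V))).dotProduct_mulVec_nonneg v
  rw [conjTranspose_eq_transpose_of_trivial, ← lineGraph_adjMatrix_add_two, add_mulVec,
    ofNat_mulVec, dotProduct_add, star_trivial, dotProduct_smul, smul_eq_mul] at this
  have hsq : v ⬝ᵥ v = ∑ e, v e ^ 2 := by simp [dotProduct, sq]
  linarith

end SimpleGraph

theorem lineGraph_adjMatrix_exp_neg_lp_norm_bound_general
    {V : Type*} [Fintype V] [DecidableEq V] (H : SimpleGraph V) [DecidableRel H.Adj]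
    [DecidableRel H.lineGraph.Adj]
    (p : ℝ≥0∞) [Fact (1 ≤ p)] (hp : 2 ≤ p) (t : ℝ) (ht : 0 ≤ t) :
    ‖LinearMap.toContinuousLinearMap
        ((WithLp.linearEquiv p ℝ (H.edgeSet → ℝ)).symm.toLinearMap ∘ₗ
          (NormedSpace.exp (-(t • H.lineGraph.adjMatrix ℝ))).mulVecLin ∘ₗ
          (WithLp.linearEquiv p ℝ (H.edgeSet → ℝ)).toLinearMap)‖ ≤
      Real.exp (t * (4 / p.toReal +
        (1 - 2 / p.toReal) * (H.lineGraph.maxDegree : ℝ))) := by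
  refine ContinuousLinearMap.opNorm_le_bound _ (Real.exp_nonneg _) fun z => ?_
  simp only [LinearMap.coe_toContinuousLinearMap', LinearMap.coe_comp, Function.comp_apply,
    LinearEquiv.coe_coe, WithLp.linearEquiv_apply, WithLp.linearEquiv_symm_apply,
    mulVecLin_apply]
  obtain rfl | hp' := eq_or_ne p ∞
  · simpa [mul_comm t] using
      norm_exp_neg_smul_mulVec_le H.lineGraph.norm_adjMatrix_mulVec_le (WithLp.ofLp z) ht
  · have hq : 2 ≤ p.toReal := by simpa using ENNReal.toReal_mono hp' hp
    have hdiss (y : H.edgeSet → ℝ) := neg_mul_sum_abs_rpow_le_sum_mulVec_mul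
      (H.lineGraph.isSymm_adjMatrix (α := ℝ))
      (fun e f => by rw [SimpleGraph.adjMatrix_apply]; positivity)
      H.lineGraph.sum_adjMatrix_apply_le_maxDegree
      H.neg_two_mul_sum_sq_le_dotProduct_lineGraph_adjMatrix_mulVec hq y
    rw [div_mul_eq_mul_div, show (2 : ℝ) * 2 = 4 by norm_num] at hdiss
    simpa [mul_comm t] using
      norm_toLp_exp_neg_smul_mulVec_le p (by linarith) hdiss (WithLp.ofLp z) ht

/-- Let `H` be a finite, simple, connected graph with at least two edges,
`G = L(H)` its line graph, `A` the adjacency matrix of `G`, `Δ = deg_max(G)`. For every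
`p ∈ [2,∞]` and `t ≥ 0`, the operator norm of `exp (-tA)` on `ℓ^p` satisfies
`‖exp (-tA)‖ ≤ exp (t·(4/p + (1 - 2/p)·Δ))` (with `4/p = 2/p = 0` when `p = ∞`). -/
theorem lineGraph_adjMatrix_exp_neg_lp_norm_bound
    {V : Type*} [Fintype V] [DecidableEq V] (H : SimpleGraph V) [DecidableRel H.Adj]
    [DecidableRel H.lineGraph.Adj]
    (hconn : H.Connected) (hE : 2 ≤ H.edgeFinset.card)
    (p : ℝ≥0∞) [Fact (1 ≤ p)] (hp : 2 ≤ p) (t : ℝ) (ht : 0 ≤ t) :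
    ‖LinearMap.toContinuousLinearMap
        ((WithLp.linearEquiv p ℝ (H.edgeSet → ℝ)).symm.toLinearMap ∘ₗ
          (NormedSpace.exp (-(t • H.lineGraph.adjMatrix ℝ))).mulVecLin ∘ₗ
          (WithLp.linearEquiv p ℝ (H.edgeSet → ℝ)).toLinearMap)‖ ≤
      Real.exp (t * (4 / p.toReal +
        (1 - 2 / p.toReal) * (H.lineGraph.maxDegree : ℝ))) :=
  lineGraph_adjMatrix_exp_neg_lp_norm_bound_general H p hp t ht
end

section
/- Let G and G̃ be two finite simple graphs on the same vertex set V, with adjacency matrices A(G) and A(G̃). Then the following are equivalent: (i) the semigroup generated by A(G̃) is dominated by the one generated by A(G), i.e., for all t ≥ 0, all f : V → ℝ with f ≥ 0, and all v ∈ V one has (exp(tA(G̃)) f)(v) ≤ (exp(tA(G)) f)(v); (ii) A(G̃)_{vw} ≤ A(G)_{vw} for all v, w ∈ V; (iii) G̃ is a subgraph of G, i.e., every edge of G̃ is an edge of G. -/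
/-!
For an entrywise nonnegative matrix `A`, the semigroup `exp (t • A)` is dominated by
`exp (t • B)` exactly when `A ≤ B` entrywise. If `A ≤ B`, the exponential series compare term by
term, because powers of nonnegative matrices are monotone in the entries. Conversely, both
semigroups equal `1` at `t = 0`, so domination for `t > 0` compares their derivatives `A` and `B`
there. Adjacency matrices are nonnegative, and for `0/1` matrices `A(G') ≤ A(G)` means `G' ≤ G`.
-/

open NormedSpace Filter Topology
open scoped Nat

theorem HasDerivAt.le_of_eventually_le_right {f g : ℝ → ℝ} {f' g' a : ℝ}
    (hf : HasDerivAt f f' a) (hg : HasDerivAt g g' a) (hfg : f a = g a)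
    (hle : ∀ᶠ t in 𝓝[>] a, f t ≤ g t) : f' ≤ g' := by
  have hslope := ((hg.sub hf).tendsto_slope).mono_left (nhdsGT_le_nhdsNE a)
  refine sub_nonneg.mp (ge_of_tendsto hslope ?_)
  filter_upwards [hle, self_mem_nhdsWithin] with t ht hat
  rw [slope_def_field]
  simp only [Pi.sub_apply, hfg, sub_self, sub_zero]
  exact div_nonneg (sub_nonneg.mpr ht) (sub_nonneg.mpr (le_of_lt hat))

namespace Matrix

variable {n R : Type*} [Fintype n]

section OrderedSemiring

variable [Semiring R] [PartialOrder R] [IsOrderedRing R]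

theorem pow_apply_le_pow_apply [DecidableEq n] {A B : Matrix n n R} (hA : ∀ i j, 0 ≤ A i j)
    (hAB : ∀ i j, A i j ≤ B i j) (k : ℕ) : ∀ i j, (A ^ k) i j ≤ (B ^ k) i j := by
  induction k with
  | zero => simp
  | succ k ih =>
    intro i j
    rw [pow_succ, pow_succ, mul_apply, mul_apply]
    refine Finset.sum_le_sum fun l _ => mul_le_mul (ih i l) (hAB l j) (hA l j) ?_
    exact (pow_apply_nonneg hA k i l).trans (ih i l)

theorem forall_nonneg_mulVec_le_iff {A B : Matrix n n R} :
    (∀ f : n → R, (∀ j, 0 ≤ f j) → ∀ i, (A *ᵥ f) i ≤ (B *ᵥ f) i) ↔ ∀ i j, A i j ≤ B i j := by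
  classical
  constructor
  · intro h i j
    simpa [mulVec_single] using h (Pi.single j 1) (Pi.single_nonneg.mpr zero_le_one) i
  · intro h f hf i
    exact Finset.sum_le_sum fun j _ => mul_le_mul_of_nonneg_right (h i j) (hf j)

end OrderedSemiring

variable [DecidableEq n]

theorem hasSum_exp_apply (A : Matrix n n ℝ) (i j : n) :
    HasSum (fun k => (k !⁻¹ : ℝ) * (A ^ k) i j) (exp A i j) := by
  let _ : NormedRing (Matrix n n ℝ) := Matrix.linftyOpNormedRing
  let _ : NormedAlgebra ℝ (Matrix n n ℝ) := Matrix.linftyOpNormedAlgebra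
  exact Pi.hasSum.mp (Pi.hasSum.mp (exp_series_hasSum_exp' (𝕂 := ℝ) A) i) j

theorem exp_apply_le_exp_apply {A B : Matrix n n ℝ} (hA : ∀ i j, 0 ≤ A i j)
    (hAB : ∀ i j, A i j ≤ B i j) (i j : n) : exp A i j ≤ exp B i j :=
  hasSum_le (fun k => mul_le_mul_of_nonneg_left (pow_apply_le_pow_apply hA hAB k i j)
    (by positivity)) (hasSum_exp_apply A i j) (hasSum_exp_apply B i j)

theorem hasDerivAt_exp_smul_apply_zero (A : Matrix n n ℝ) (i j : n) :
    HasDerivAt (fun t : ℝ => exp (t • A) i j) (A i j) 0 := by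
  let _ : NormedRing (Matrix n n ℝ) := Matrix.linftyOpNormedRing
  let _ : NormedAlgebra ℝ (Matrix n n ℝ) := Matrix.linftyOpNormedAlgebra
  have hexp := hasDerivAt_exp_smul_const (𝕂 := ℝ) A 0
  rw [zero_smul, exp_zero, one_mul] at hexp
  exact (entryLinearMap ℝ ℝ i j).toContinuousLinearMap.hasFDerivAt.comp_hasDerivAt 0 hexp

theorem exp_smul_apply_le_iff {A B : Matrix n n ℝ} (hA : ∀ i j, 0 ≤ A i j) :
    (∀ t : ℝ, 0 ≤ t → ∀ i j, exp (t • A) i j ≤ exp (t • B) i j) ↔ ∀ i j, A i j ≤ B i j := by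
  constructor
  · intro h i j
    refine (hasDerivAt_exp_smul_apply_zero A i j).le_of_eventually_le_right
      (hasDerivAt_exp_smul_apply_zero B i j) (by simp) ?_
    filter_upwards [self_mem_nhdsWithin] with t ht
    exact h t (le_of_lt ht) i j
  · intro hAB t ht
    exact exp_apply_le_exp_apply (fun i j => mul_nonneg ht (hA i j))
      (fun i j => mul_le_mul_of_nonneg_left (hAB i j) ht)

end Matrix

namespace SimpleGraph

variable {V R : Type*} [Semiring R] [PartialOrder R] [IsOrderedRing R]
  {G G' : SimpleGraph V} [DecidableRel G.Adj] [DecidableRel G'.Adj]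

theorem adjMatrix_apply_nonneg (v w : V) : 0 ≤ G.adjMatrix R v w := by
  rw [adjMatrix_apply]
  split_ifs <;> simp

theorem adjMatrix_le_adjMatrix_iff [Nontrivial R] :
    (∀ v w, G'.adjMatrix R v w ≤ G.adjMatrix R v w) ↔ G' ≤ G := by
  refine ⟨fun h v w hvw => ?_, fun h v w => ?_⟩
  · by_contra hG
    exact (h v w).not_gt (by simp [hvw, hG])
  · by_cases hvw : G'.Adj v w
    · simp [hvw, h hvw]
    · simpa [hvw] using adjMatrix_apply_nonneg v w

end SimpleGraph

/-- For two finite simple graphs `G`, `G'` on the same vertex set `V`, the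
following are equivalent: (i) the semigroup generated by `A(G')` is dominated by the one
generated by `A(G)`; (ii) `A(G') ≤ A(G)` entrywise; (iii) every edge of `G'` is an edge of
`G`. -/
theorem adjMatrix_exp_domination_iff_subgraph
    {V : Type*} [Fintype V] [DecidableEq V]
    (G G' : SimpleGraph V) [DecidableRel G.Adj] [DecidableRel G'.Adj] :
    ((∀ t : ℝ, 0 ≤ t → ∀ f : V → ℝ, (∀ v, 0 ≤ f v) → ∀ v : V,
        (NormedSpace.exp (t • G'.adjMatrix ℝ)).mulVec f v ≤
          (NormedSpace.exp (t • G.adjMatrix ℝ)).mulVec f v) ↔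
      (∀ v w : V, G'.adjMatrix ℝ v w ≤ G.adjMatrix ℝ v w)) ∧
    ((∀ v w : V, G'.adjMatrix ℝ v w ≤ G.adjMatrix ℝ v w) ↔
      (∀ e ∈ G'.edgeSet, e ∈ G.edgeSet)) :=
  ⟨(forall₂_congr fun _ _ => Matrix.forall_nonneg_mulVec_le_iff).trans
      (Matrix.exp_smul_apply_le_iff SimpleGraph.adjMatrix_apply_nonneg),
    SimpleGraph.adjMatrix_le_adjMatrix_iff.trans SimpleGraph.edgeSet_subset_edgeSet.symm⟩
end
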